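/- arXiv:1910.07504 — 2 statements merged into one kernel-verified Lean document; each statement's English description precedes it below -/
import Mathlib

section
/- Let n ≥ 2 and let f : Fin n → ℤ satisfy ∑_i f(i) = 0. Set N = ∑_i max(f(i), 0). For a subset S ⊆ Fin n, let a = ∑_{i ∈ S} max(f(i), 0) and b = ∑_{i ∈ S} max(−f(i), 0). Then ∑_{i ∈ S, j ∉ S} max(−f(i)·f(j), 0) = a·(N − b) + b·(N − a). -/
/-!
Expanding `(x y)⁻ = x⁺ y⁻ + x⁻ y⁺` splits the sum over edges leaving `S` into
`a · (negative mass outside S) + b · (positive mass outside S)`. Since `∑ f = 0`, the total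
negative mass equals the total positive mass `N`, so these outside masses are `N - b` and `N - a`.
-/

open Finset

lemma negPart_mul {R : Type*} [Ring R] [LinearOrder R] [IsOrderedRing R] (x y : R) :
    (x * y)⁻ = x⁺ * y⁻ + x⁻ * y⁺ := by
  rcases le_total 0 x with hx | hx <;> rcases le_total 0 y with hy | hy
  · simp [negPart_eq_zero.2 (mul_nonneg hx hy), hx, hy]
  · simp [negPart_eq_neg.2 (mul_nonpos_of_nonneg_of_nonpos hx hy), hx, hy]
  · simp [negPart_eq_neg.2 (mul_nonpos_of_nonpos_of_nonneg hx hy), hx, hy]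
  · simp [negPart_eq_zero.2 (mul_nonneg_of_nonpos_of_nonpos hx hy), hx, hy]

lemma Finset.sum_negPart_eq_sum_posPart {ι R : Type*} [AddCommGroup R] [LinearOrder R]
    [IsOrderedAddMonoid R] {s : Finset ι} {f : ι → R} (hf : ∑ i ∈ s, f i = 0) :
    ∑ i ∈ s, (f i)⁻ = ∑ i ∈ s, (f i)⁺ := by
  rw [eq_comm, ← sub_eq_zero, ← sum_sub_distrib]
  simpa only [posPart_sub_negPart] using hf

lemma Finset.sum_compl_eq_sub {ι M : Type*} [Fintype ι] [DecidableEq ι] [AddCommGroup M]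
    (s : Finset ι) (f : ι → M) : ∑ i ∈ sᶜ, f i = ∑ i, f i - ∑ i ∈ s, f i :=
  eq_sub_of_add_eq (sum_compl_add_sum s f)

theorem sum_sum_compl_negPart_mul {ι R : Type*} [Fintype ι] [DecidableEq ι] [CommRing R]
    [LinearOrder R] [IsOrderedRing R] {f : ι → R} (hf : ∑ i, f i = 0) (S : Finset ι) :
    ∑ i ∈ S, ∑ j ∈ Sᶜ, (f i * f j)⁻ =
      (∑ i ∈ S, (f i)⁺) * (∑ i, (f i)⁺ - ∑ i ∈ S, (f i)⁻) +
      (∑ i ∈ S, (f i)⁻) * (∑ i, (f i)⁺ - ∑ i ∈ S, (f i)⁺) := by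
  simp_rw [negPart_mul, sum_add_distrib, ← mul_sum, ← sum_mul, sum_compl_eq_sub,
    sum_negPart_eq_sum_posPart hf]

theorem statement_11_general (n : ℕ) (f : Fin n → ℤ)
    (hf : ∑ i, f i = 0) (S : Finset (Fin n)) :
    ∑ i ∈ S, ∑ j ∈ Sᶜ, max (-(f i * f j)) 0 =
      (∑ i ∈ S, max (f i) 0) * ((∑ i, max (f i) 0) - ∑ i ∈ S, max (-f i) 0) +
      (∑ i ∈ S, max (-f i) 0) * ((∑ i, max (f i) 0) - ∑ i ∈ S, max (f i) 0) :=
  sum_sum_compl_negPart_mul hf S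

theorem statement_11 (n : ℕ) (hn : 2 ≤ n) (f : Fin n → ℤ)
    (hf : ∑ i, f i = 0) (S : Finset (Fin n)) :
    ∑ i ∈ S, ∑ j ∈ Sᶜ, max (-(f i * f j)) 0 =
      (∑ i ∈ S, max (f i) 0) * ((∑ i, max (f i) 0) - ∑ i ∈ S, max (-f i) 0) +
      (∑ i ∈ S, max (-f i) 0) * ((∑ i, max (f i) 0) - ∑ i ∈ S, max (f i) 0) :=
  statement_11_general n f hf S
end

section
/- Let n ≥ 2 and let f : Fin n → ℤ satisfy ∑_i f(i) = 0, and set N = ∑_i max(f(i), 0). Then for every subset S ⊆ Fin n, ∑_{i ∈ S, j ∉ S} max(−f(i)·f(j), 0) ≥ N · |∑_{i ∈ S} f(i)|. -/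
/-!
Write `f = f⁺ - f⁻` and let `a, b` (resp. `c, d`) be the sums of `f⁺, f⁻` over `S` (resp. `Sᶜ`).
Since `(-(x * y))⁺ = x⁺ y⁻ + x⁻ y⁺`, the left side factors as `a d + b c`, while `N = a + c` and
`∑_{i ∈ S} f i = a - b`. Using `a - b + c - d = 0`, the gap `a d + b c - N |a - b|` equals `2 b c`
when `a ≥ b` and `2 a d` when `a ≤ b`.
-/

open Finset

section

variable {α : Type*} [CommRing α] [LinearOrder α] [IsStrictOrderedRing α]

theorem posPart_neg_mul (x y : α) : (-(x * y))⁺ = x⁺ * y⁻ + x⁻ * y⁺ := by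
  rcases le_total 0 x with hx | hx <;> rcases le_total 0 y with hy | hy
  · simp [hx, hy, mul_nonneg hx hy]
  · simp [hx, hy, mul_nonpos_of_nonneg_of_nonpos hx hy]
  · simp [hx, hy, mul_nonpos_of_nonpos_of_nonneg hx hy]
  · simp [hx, hy, mul_nonneg_of_nonpos_of_nonpos hx hy]

theorem add_mul_abs_sub_le_mul_add_mul {a b c d : α} (ha : 0 ≤ a) (hb : 0 ≤ b) (hc : 0 ≤ c)
    (hd : 0 ≤ d) (h : a - b + (c - d) = 0) : (a + c) * |a - b| ≤ a * d + b * c := by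
  rcases abs_cases (a - b) with ⟨habs, -⟩ | ⟨habs, -⟩ <;> rw [habs]
  · linear_combination 2 * mul_nonneg hb hc + a * h
  · linear_combination 2 * mul_nonneg ha hd - a * h

variable {ι : Type*}

theorem sum_eq_sum_posPart_sub_sum_negPart (s : Finset ι) (f : ι → α) :
    ∑ i ∈ s, f i = ∑ i ∈ s, (f i)⁺ - ∑ i ∈ s, (f i)⁻ := by
  simp [← sum_sub_distrib]

theorem sum_sum_posPart_neg_mul (s t : Finset ι) (f : ι → α) :
    ∑ i ∈ s, ∑ j ∈ t, (-(f i * f j))⁺ =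
      (∑ i ∈ s, (f i)⁺) * ∑ j ∈ t, (f j)⁻ + (∑ i ∈ s, (f i)⁻) * ∑ j ∈ t, (f j)⁺ := by
  simp only [posPart_neg_mul, sum_add_distrib, sum_mul_sum]

theorem sum_posPart_mul_abs_sum_le [Fintype ι] [DecidableEq ι] (f : ι → α) (hf : ∑ i, f i = 0)
    (S : Finset ι) :
    (∑ i, (f i)⁺) * |∑ i ∈ S, f i| ≤ ∑ i ∈ S, ∑ j ∈ Sᶜ, (-(f i * f j))⁺ := by
  rw [← sum_add_sum_compl S, sum_eq_sum_posPart_sub_sum_negPart S f,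
    sum_eq_sum_posPart_sub_sum_negPart Sᶜ f] at hf
  rw [← sum_add_sum_compl S, sum_eq_sum_posPart_sub_sum_negPart S f, sum_sum_posPart_neg_mul]
  exact add_mul_abs_sub_le_mul_add_mul (sum_nonneg fun i _ ↦ posPart_nonneg _)
    (sum_nonneg fun i _ ↦ negPart_nonneg _) (sum_nonneg fun i _ ↦ posPart_nonneg _)
    (sum_nonneg fun i _ ↦ negPart_nonneg _) hf

end

theorem statement_12_general (n : ℕ) (f : Fin n → ℤ)
    (hf : ∑ i, f i = 0) (S : Finset (Fin n)) :
    ∑ i ∈ S, ∑ j ∈ Sᶜ, max (-(f i * f j)) 0 ≥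
      (∑ i, max (f i) 0) * |∑ i ∈ S, f i| :=
  sum_posPart_mul_abs_sum_le f hf S

theorem statement_12 (n : ℕ) (hn : 2 ≤ n) (f : Fin n → ℤ)
    (hf : ∑ i, f i = 0) (S : Finset (Fin n)) :
    ∑ i ∈ S, ∑ j ∈ Sᶜ, max (-(f i * f j)) 0 ≥
      (∑ i, max (f i) 0) * |∑ i ∈ S, f i| :=
  statement_12_general n f hf S
end
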